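/- Let $\mathcal{C}$ be a clutter on a finite vertex set $X$ whose edge ideal has the strong persistence property, and let $x, y \notin X$ be distinct new vertices. Define the clutter $\mathcal{C}'$ on $X \cup \{x,y\}$ with edges $\{e \cup \{x\},\ e \cup \{y\} : e \in E(\mathcal{C})\}$. Then $I(\mathcal{C}')$ has the strong persistence property. -/

import Mathlib

/-! The new edge ideal is `I · (x, y)`, a product of two monomial ideals in disjoint sets of
variables. For a monomial ideal with generator exponents `S`, strong persistence says: if `a + m`
dominates an element of the `(k+1)`-fold sumset of `S` for every `a ∈ S`, then `m` dominates an
element of the `k`-fold sumset. Splitting `m = m₁ + m₂` along the two sets of variables, a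
domination `w + q ≤ (a + m₁) + (b + m₂)` splits into `w ≤ a + m₁` and `q ≤ b + m₂`, so strong
persistence of both factors passes to the product. An ideal generated by variables is strongly
persistent by counting degrees. -/

open MvPolynomial

/-- The edge ideal of a clutter given by its (finite) edge set. -/
noncomputable def edgeIdeal {n : ℕ} (K : Type*) [Field K] (E : Finset (Finset (Fin n))) :
    Ideal (MvPolynomial (Fin n) K) :=
  Ideal.span ((fun e => ∏ i ∈ e, (X i : MvPolynomial (Fin n) K)) '' (E : Set (Finset (Fin n))))

/-- The strong persistence property: `(I^{k+1} : I) = I^k` for all `k ≥ 1`. -/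
def StrongPersistence {n : ℕ} {K : Type*} [Field K]
    (I : Ideal (MvPolynomial (Fin n) K)) : Prop :=
  ∀ k : ℕ, 1 ≤ k → Submodule.colon (I ^ (k + 1)) I = I ^ k

open scoped Pointwise

section MonomialSpan

variable {σ : Type*}

noncomputable def monomialSpan (R : Type*) [CommSemiring R] (S : Set (σ →₀ ℕ)) :
    Ideal (MvPolynomial σ R) :=
  Ideal.span ((fun m => monomial m (1 : R)) '' S)

variable {R : Type*} [CommSemiring R]

theorem monomial_mem_monomialSpan [Nontrivial R] {S : Set (σ →₀ ℕ)} {m : σ →₀ ℕ} :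
    monomial m (1 : R) ∈ monomialSpan R S ↔ m ∈ upperClosure S := by
  classical
  rw [monomialSpan, mem_ideal_span_monomial_image, support_monomial, if_neg one_ne_zero]
  simp [mem_upperClosure]

theorem monomialSpan_add (S T : Set (σ →₀ ℕ)) :
    monomialSpan R (S + T) = monomialSpan R S * monomialSpan R T := by
  rw [monomialSpan, monomialSpan, monomialSpan, Ideal.span_mul_span, ← Set.image2_add,
    ← Set.image2_mul, Set.image_image2_distrib (f' := (· * ·)) fun a b => by
      rw [monomial_mul, one_mul]]

theorem monomialSpan_pow (S : Set (σ →₀ ℕ)) (k : ℕ) :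
    monomialSpan R S ^ k = monomialSpan R (k • S) := by
  induction k with
  | zero => simp [monomialSpan, Ideal.span_singleton_one]
  | succ k ih => rw [pow_succ, ih, succ_nsmul, monomialSpan_add]

theorem mul_monomial_mem_monomialSpan {B : Set (σ →₀ ℕ)} {f : MvPolynomial σ R}
    {a : σ →₀ ℕ} :
    f * monomial a 1 ∈ monomialSpan R B ↔ ∀ m ∈ f.support, a + m ∈ upperClosure B := by
  rw [monomialSpan, mem_ideal_span_monomial_image]
  constructor
  · intro h m hm
    refine mem_upperClosure.2 (add_comm m a ▸ h (m + a) ?_)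
    rwa [mem_support_iff, coeff_mul_monomial, mul_one, ← mem_support_iff]
  · intro h xi hxi
    rw [mem_support_iff, coeff_mul_monomial'] at hxi
    split_ifs at hxi with ha
    · rw [mul_one, ← mem_support_iff] at hxi
      simpa only [add_tsub_cancel_of_le ha] using mem_upperClosure.1 (h _ hxi)
    · exact absurd rfl hxi

theorem mem_colon_monomialSpan {A B : Set (σ →₀ ℕ)} {f : MvPolynomial σ R} :
    f ∈ (monomialSpan R B).colon (monomialSpan R A : Set (MvPolynomial σ R)) ↔
      ∀ m ∈ f.support, ∀ a ∈ A, a + m ∈ upperClosure B := by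
  rw [show monomialSpan R A = Ideal.span _ from rfl, Ideal.colon_span, Submodule.mem_colon,
    Set.forall_mem_image]
  simp only [smul_eq_mul, mul_monomial_mem_monomialSpan]
  exact ⟨fun h m hm a ha => h ha m hm, fun h a ha m hm => h m hm a ha⟩

end MonomialSpan

theorem Ideal.pow_le_colon_pow_succ {R : Type*} [CommSemiring R] (I : Ideal R) (k : ℕ) :
    I ^ k ≤ (I ^ (k + 1)).colon (I : Set R) := fun _ hr =>
  Submodule.mem_colon.2 fun _ hs => pow_succ I k ▸ Ideal.mul_mem_mul hr hs

section ExponentStrongPersistence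

variable {σ : Type*}

/-- `k • S` is the `k`-fold sumset of `S`, the exponent set of the generators of the `k`-th power. -/
def ExponentStrongPersistence (S : Set (σ →₀ ℕ)) : Prop :=
  ∀ k, 1 ≤ k → ∀ m, (∀ a ∈ S, a + m ∈ upperClosure ((k + 1) • S)) → m ∈ upperClosure (k • S)

theorem strongPersistence_monomialSpan_iff {n : ℕ} {K : Type*} [Field K]
    {S : Set (Fin n →₀ ℕ)} :
    StrongPersistence (monomialSpan K S) ↔ ExponentStrongPersistence S := by
  simp only [StrongPersistence, ExponentStrongPersistence]
  refine forall₂_congr fun k _ => ?_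
  rw [← (Ideal.pow_le_colon_pow_succ _ k).ge_iff_eq', monomialSpan_pow, monomialSpan_pow]
  constructor
  · intro h m hm
    refine monomial_mem_monomialSpan.1 (h (mem_colon_monomialSpan.2 fun m' hm' => ?_))
    exact Finset.mem_singleton.1 (support_monomial_subset hm') ▸ hm
  · intro h f hf
    rw [monomialSpan, mem_ideal_span_monomial_image]
    exact fun m hm => mem_upperClosure.1 (h m (mem_colon_monomialSpan.1 hf m hm))

theorem ExponentStrongPersistence.nonempty {S : Set (σ →₀ ℕ)}
    (hS : ExponentStrongPersistence S) : S.Nonempty := by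
  by_contra h
  rw [Set.not_nonempty_iff_eq_empty] at h
  subst h
  simpa using hS 1 le_rfl 0 (by simp)

end ExponentStrongPersistence

section IdealOfVariables

variable {σ : Type*}

theorem sum_apply_eq_of_mem_nsmul_singles {t : Finset σ} {k : ℕ} {q : σ →₀ ℕ}
    (hq : q ∈ k • ((fun i => Finsupp.single i 1) '' (t : Set σ))) : ∑ i ∈ t, q i = k := by
  classical
  induction k generalizing q with
  | zero => simp_all
  | succ k ih =>
    rw [succ_nsmul] at hq
    obtain ⟨q', hq', _, ⟨j, hj, rfl⟩, rfl⟩ := Set.mem_add.1 hq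
    simp [Finset.sum_add_distrib, ih hq', Finsupp.single_apply, Finset.mem_coe.1 hj]

theorem exists_mem_nsmul_singles_le {t : Finset σ} {k : ℕ} {m : σ →₀ ℕ}
    (hm : k ≤ ∑ i ∈ t, m i) :
    ∃ q ∈ k • ((fun i => Finsupp.single i 1) '' (t : Set σ)), q ≤ m := by
  classical
  induction k generalizing m with
  | zero => exact ⟨0, by simp, by simp⟩
  | succ k ih =>
    obtain ⟨j, hj, hmj⟩ := Finset.exists_ne_zero_of_sum_ne_zero (by omega : ∑ i ∈ t, m i ≠ 0)
    obtain ⟨m', rfl⟩ := exists_add_of_le (Finsupp.single_le_iff.2 (Nat.one_le_iff_ne_zero.2 hmj))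
    have hm' : k ≤ ∑ i ∈ t, m' i := by
      simp [Finset.sum_add_distrib, Finsupp.single_apply, hj] at hm
      omega
    obtain ⟨q, hq, hqm⟩ := ih hm'
    refine ⟨q + Finsupp.single j 1, ?_, add_comm (Finsupp.single j 1) m' ▸ add_le_add_left hqm _⟩
    rw [succ_nsmul]
    exact Set.add_mem_add hq ⟨j, hj, rfl⟩

theorem exponentStrongPersistence_singles {t : Finset σ} (ht : t.Nonempty) :
    ExponentStrongPersistence ((fun i => Finsupp.single i 1) '' (t : Set σ)) := by
  classical
  intro k _ m hm
  obtain ⟨j, hj⟩ := ht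
  obtain ⟨q, hq, hqm⟩ := mem_upperClosure.1 (hm _ ⟨j, hj, rfl⟩)
  have hdeg : k + 1 ≤ 1 + ∑ i ∈ t, m i := calc
    k + 1 = ∑ i ∈ t, q i := (sum_apply_eq_of_mem_nsmul_singles hq).symm
    _ ≤ ∑ i ∈ t, (Finsupp.single j 1 + m : σ →₀ ℕ) i := Finset.sum_le_sum fun i _ => hqm i
    _ = 1 + ∑ i ∈ t, m i := by simp [Finset.sum_add_distrib, Finsupp.single_apply, hj]
  exact mem_upperClosure.2 (exists_mem_nsmul_singles_le (by omega))

end IdealOfVariables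

section DisjointVariables

variable {σ : Type*}

theorem add_le_add_iff_of_mem_supported {s : Set σ} {w a q b : σ →₀ ℕ}
    (hw : w ∈ Finsupp.supported ℕ ℕ s) (ha : a ∈ Finsupp.supported ℕ ℕ s)
    (hq : q ∈ Finsupp.supported ℕ ℕ sᶜ) (hb : b ∈ Finsupp.supported ℕ ℕ sᶜ) :
    w + q ≤ a + b ↔ w ≤ a ∧ q ≤ b := by
  rw [Finsupp.mem_supported'] at hw ha hq hb
  refine ⟨fun h => ⟨fun i => ?_, fun i => ?_⟩, fun h => add_le_add h.1 h.2⟩ <;>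
  · have hi := h i
    by_cases his : i ∈ s
    · simp_all [hq i (not_not.2 his), hb i (not_not.2 his)]
    · simp_all [hw i his, ha i his]

theorem nsmul_subset_supported {S : Set (σ →₀ ℕ)} {s : Set σ}
    (hS : S ⊆ Finsupp.supported ℕ ℕ s) (k : ℕ) : k • S ⊆ Finsupp.supported ℕ ℕ s :=
  AddSubmonoid.nsmul_subset (S := (Finsupp.supported ℕ ℕ s).toAddSubmonoid) hS

theorem ExponentStrongPersistence.add {S T : Set (σ →₀ ℕ)} {s : Set σ}
    (hS : ExponentStrongPersistence S) (hT : ExponentStrongPersistence T)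
    (hSs : S ⊆ Finsupp.supported ℕ ℕ s) (hTs : T ⊆ Finsupp.supported ℕ ℕ sᶜ) :
    ExponentStrongPersistence (S + T) := by
  classical
  intro k hk m hm
  set m₁ := m.filter (· ∈ s)
  set m₂ := m.filter (· ∉ s)
  have hm₁ : m₁ ∈ Finsupp.supported ℕ ℕ s := by
    simpa [Finsupp.mem_supported'] using fun i hi => Finsupp.filter_apply_neg _ m hi
  have hm₂ : m₂ ∈ Finsupp.supported ℕ ℕ sᶜ := by
    simpa [Finsupp.mem_supported'] using fun i hi => Finsupp.filter_apply_neg _ m (not_not.2 hi)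
  have hsplit : ∀ a ∈ S, ∀ b ∈ T, ∃ w ∈ (k + 1) • S, ∃ q ∈ (k + 1) • T,
      w ≤ a + m₁ ∧ q ≤ b + m₂ := by
    intro a ha b hb
    obtain ⟨_, ⟨w, hw, q, hq, rfl⟩, hle⟩ :=
      mem_upperClosure.1 (nsmul_add S T (k + 1) ▸ hm _ (Set.add_mem_add ha hb))
    rw [← Finsupp.filter_add_filter_not m (· ∈ s), add_add_add_comm,
      add_le_add_iff_of_mem_supported (nsmul_subset_supported hSs _ hw)
        (add_mem (hSs ha) hm₁) (nsmul_subset_supported hTs _ hq) (add_mem (hTs hb) hm₂)] at hle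
    exact ⟨w, hw, q, hq, hle⟩
  obtain ⟨v, hv, hvm⟩ := mem_upperClosure.1 <| hS k hk m₁ fun a ha =>
    have ⟨b, hb⟩ := hT.nonempty
    have ⟨w, hw, _, _, hwa, _⟩ := hsplit a ha b hb
    mem_upperClosure.2 ⟨w, hw, hwa⟩
  obtain ⟨u, hu, hum⟩ := mem_upperClosure.1 <| hT k hk m₂ fun b hb =>
    have ⟨a, ha⟩ := hS.nonempty
    have ⟨_, _, q, hq, _, hqb⟩ := hsplit a ha b hb
    mem_upperClosure.2 ⟨q, hq, hqb⟩
  refine mem_upperClosure.2 ⟨v + u, nsmul_add S T k ▸ Set.add_mem_add hv hu, ?_⟩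
  exact Finsupp.filter_add_filter_not m (· ∈ s) ▸ add_le_add hvm hum

end DisjointVariables

section EdgeIdeal

variable {σ : Type*}

noncomputable def edgeExponent (e : Finset σ) : σ →₀ ℕ := ∑ i ∈ e, Finsupp.single i 1

theorem edgeIdeal_eq_monomialSpan {n : ℕ} (K : Type*) [Field K] (E : Finset (Finset (Fin n))) :
    edgeIdeal K E = monomialSpan K (edgeExponent '' (E : Set (Finset (Fin n)))) := by
  rw [edgeIdeal, monomialSpan, Set.image_image]
  congr 1
  exact Set.image_congr fun e _ => by rw [edgeExponent, monomial_sum_one]; rfl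

theorem edgeExponent_mem_supported {e : Finset σ} {s : Set σ} (he : ↑e ⊆ s) :
    edgeExponent e ∈ Finsupp.supported ℕ ℕ s :=
  Submodule.sum_mem _ fun _ hi => Finsupp.single_mem_supported ℕ 1 (he hi)

theorem edgeExponent_insert [DecidableEq σ] {x : σ} {e : Finset σ} (hx : x ∉ e) :
    edgeExponent (insert x e) = edgeExponent e + Finsupp.single x 1 := by
  rw [edgeExponent, edgeExponent, Finset.sum_insert hx, add_comm]

theorem edgeExponent_image_insert_union [DecidableEq σ] {E : Finset (Finset σ)} {x y : σ}
    (hx : ∀ e ∈ E, x ∉ e) (hy : ∀ e ∈ E, y ∉ e) :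
    edgeExponent '' ↑(E.image (insert x) ∪ E.image (insert y)) =
      edgeExponent '' ↑E + (fun i => Finsupp.single i 1) '' (({x, y} : Finset σ) : Set σ) := by
  rw [Finset.coe_union, Finset.coe_image, Finset.coe_image, Set.image_union, Set.image_image,
    Set.image_image, Finset.coe_pair, Set.image_pair, ← Set.image2_add, Set.image2_insert_right,
    Set.image2_singleton_right, Set.image_image, Set.image_image,
    Set.image_congr fun e he => edgeExponent_insert (hx e he),
    Set.image_congr fun e he => edgeExponent_insert (hy e he)]

end EdgeIdeal

theorem stmt12_general {n : ℕ} {K : Type*} [Field K]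
    (Xs : Finset (Fin n)) (E : Finset (Finset (Fin n)))
    (hVE : ∀ e ∈ E, e ⊆ Xs)
    (x y : Fin n) (hx : x ∉ Xs) (hy : y ∉ Xs)
    (hspp : StrongPersistence (edgeIdeal K E)) :
    StrongPersistence (edgeIdeal K (E.image (insert x) ∪ E.image (insert y))) := by
  rw [edgeIdeal_eq_monomialSpan, strongPersistence_monomialSpan_iff] at hspp ⊢
  rw [edgeExponent_image_insert_union (fun e he hxe => hx (hVE e he hxe))
    (fun e he hye => hy (hVE e he hye))]
  refine hspp.add (exponentStrongPersistence_singles (Finset.insert_nonempty x {y}))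
    (s := Xs) ?_ ?_
  · rintro _ ⟨e, he, rfl⟩
    exact edgeExponent_mem_supported (Finset.coe_subset.2 (hVE e he))
  · rintro _ ⟨i, hi, rfl⟩
    refine Finsupp.single_mem_supported ℕ 1 ?_
    rcases Finset.mem_insert.1 hi with rfl | hi
    · exact hx
    · exact Finset.mem_singleton.1 hi ▸ hy

/-- If the clutter `𝒞` on `X` has the strong persistence property and
`x, y ∉ X` are distinct, then the clutter with edges `{e ∪ {x}, e ∪ {y} : e ∈ E(𝒞)}`
has the strong persistence property. -/
theorem stmt12 {n : ℕ} {K : Type*} [Field K]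
    (Xs : Finset (Fin n)) (E : Finset (Finset (Fin n)))
    (hVE : ∀ e ∈ E, e ⊆ Xs)
    (hclutter : ∀ e ∈ E, ∀ f ∈ E, e ⊆ f → e = f)
    (x y : Fin n) (hxy : x ≠ y) (hx : x ∉ Xs) (hy : y ∉ Xs)
    (hspp : StrongPersistence (edgeIdeal K E)) :
    StrongPersistence (edgeIdeal K (E.image (insert x) ∪ E.image (insert y))) :=
  stmt12_general Xs E hVE x y hx hy hspp
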